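/- Fix m < 0 and define F(x) = −x²/2 + 2mx + Φ(x), where Φ(x) = (−|x|√(x²−2)/2 + log((|x|+√(x²−2))/√2))·1_{|x|≥√2}. If m < −√2/2, then F attains its unique global maximum at x* = m + 1/(2m), with F''(x*) = −4m²/(2m²−1) and F(x*) = m² + log|m| + (1/2)(1 + log 2). -/

import Mathlib

open Real Set Filter Topology


/-- The GOE edge large-deviation rate function. -/
noncomputable def Phi (x : ℝ) : ℝ :=
  if Real.sqrt 2 ≤ |x| then
    -(|x| * Real.sqrt (x ^ 2 - 2)) / 2 +
      Real.log ((|x| + Real.sqrt (x ^ 2 - 2)) / Real.sqrt 2)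
  else 0

/-- the formula for Phi on `[√2, ∞)` -/
noncomputable def phiP (y : ℝ) : ℝ :=
  -(y * Real.sqrt (y ^ 2 - 2)) / 2 + Real.log ((y + Real.sqrt (y ^ 2 - 2)) / Real.sqrt 2)

lemma sqrt2_pos : (0:ℝ) < Real.sqrt 2 := Real.sqrt_pos.2 (by norm_num)

lemma one_lt_sqrt2 : (1:ℝ) < Real.sqrt 2 := by
  nlinarith [Real.sq_sqrt (by norm_num : (2:ℝ) ≥ 0), Real.sqrt_nonneg 2]

lemma phi_eq_phiP {y : ℝ} (hy : Real.sqrt 2 ≤ y) : Phi y = phiP y := by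
  have h0 : 0 ≤ y := le_trans sqrt2_pos.le hy
  simp only [Phi, phiP, abs_of_nonneg h0, if_pos hy]

lemma phi_even (x : ℝ) : Phi (-x) = Phi x := by
  simp [Phi, abs_neg, neg_pow]

lemma phi_zero_of_abs_lt {y : ℝ} (hy : |y| < Real.sqrt 2) : Phi y = 0 := by
  simp only [Phi, if_neg (not_le.2 hy)]

lemma sqrt_sub_two_pos {x : ℝ} (hx : Real.sqrt 2 < x) : 0 < x ^ 2 - 2 := by
  nlinarith [Real.sq_sqrt (by norm_num : (2:ℝ) ≥ 0), sqrt2_pos]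

lemma hasDerivAt_phiP {x : ℝ} (hx : Real.sqrt 2 < x) :
    HasDerivAt phiP (-Real.sqrt (x ^ 2 - 2)) x := by
  have hu : 0 < x ^ 2 - 2 := sqrt_sub_two_pos hx
  set s := Real.sqrt (x ^ 2 - 2) with hs
  have hspos : 0 < s := Real.sqrt_pos.2 hu
  have hs2 : s ^ 2 = x ^ 2 - 2 := Real.sq_sqrt hu.le
  have hxpos : 0 < x := lt_trans sqrt2_pos hx
  have hq : HasDerivAt (fun y : ℝ => y ^ 2 - 2) (2 * x) x := by
    simpa using ((hasDerivAt_pow 2 x).sub_const 2)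
  have hsq : HasDerivAt (fun y : ℝ => Real.sqrt (y ^ 2 - 2)) (2 * x / (2 * s)) x :=
    hq.sqrt (by positivity)
  have h1 : HasDerivAt (fun y : ℝ => -(y * Real.sqrt (y ^ 2 - 2)) / 2)
      (-(1 * s + x * (2 * x / (2 * s))) / 2) x :=
    (((hasDerivAt_id x).mul hsq).neg).div_const 2
  have harg : HasDerivAt (fun y : ℝ => (y + Real.sqrt (y ^ 2 - 2)) / Real.sqrt 2)
      ((1 + 2 * x / (2 * s)) / Real.sqrt 2) x :=
    ((hasDerivAt_id x).add hsq).div_const _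
  have hargpos : (x + s) / Real.sqrt 2 > 0 := by positivity
  have hlog : HasDerivAt (fun y : ℝ => Real.log ((y + Real.sqrt (y ^ 2 - 2)) / Real.sqrt 2))
      ((1 + 2 * x / (2 * s)) / Real.sqrt 2 / ((x + s) / Real.sqrt 2)) x :=
    harg.log (ne_of_gt hargpos)
  have := h1.add hlog
  have key : -(1 * s + x * (2 * x / (2 * s))) / 2
      + (1 + 2 * x / (2 * s)) / Real.sqrt 2 / ((x + s) / Real.sqrt 2) = -s := by
    rw [div_div_div_cancel_right₀ (ne_of_gt sqrt2_pos)]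
    field_simp
    linear_combination (x + s) * hs2
  exact this.congr_deriv key

lemma phiP_sqrt2 : phiP (Real.sqrt 2) = 0 := by
  have h2 : Real.sqrt 2 ^ 2 - 2 = 0 := by
    rw [Real.sq_sqrt (by norm_num : (2:ℝ) ≥ 0)]; ring
  simp [phiP, h2, Real.sqrt_zero, div_self (ne_of_gt sqrt2_pos)]

lemma continuousOn_phiP : ContinuousOn phiP (Ici (Real.sqrt 2)) := by
  have hs : Continuous (fun y : ℝ => Real.sqrt (y ^ 2 - 2)) := by
    exact Real.continuous_sqrt.comp (by continuity)
  apply ContinuousOn.add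
  · exact ((continuous_id.mul hs).neg.div_const 2).continuousOn
  · apply ContinuousOn.log
    · exact ((continuous_id.add hs).div_const _).continuousOn
    · intro y hy
      have : 0 < y := lt_of_lt_of_le sqrt2_pos hy
      have := Real.sqrt_nonneg (y ^ 2 - 2)
      positivity

lemma phiP_nonpos {y : ℝ} (hy : Real.sqrt 2 ≤ y) : phiP y ≤ 0 := by
  have hanti : AntitoneOn phiP (Ici (Real.sqrt 2)) := by
    apply antitoneOn_of_deriv_nonpos (convex_Ici _) continuousOn_phiP
    · intro x hx
      rw [interior_Ici] at hx
      exact (hasDerivAt_phiP hx).differentiableAt.differentiableWithinAt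
    · intro x hx
      rw [interior_Ici] at hx
      rw [(hasDerivAt_phiP hx).deriv]
      simp [Real.sqrt_nonneg]
  calc phiP y ≤ phiP (Real.sqrt 2) := hanti self_mem_Ici hy hy
  _ = 0 := phiP_sqrt2

lemma phiP_lower {y : ℝ} (hy : Real.sqrt 2 ≤ y) :
    -(Real.sqrt (y ^ 2 - 2) * (y - Real.sqrt 2)) ≤ phiP y := by
  set A : ℝ → ℝ := fun y => phiP y + Real.sqrt (y ^ 2 - 2) * (y - Real.sqrt 2) with hA
  have hsc : Continuous (fun y : ℝ => Real.sqrt (y ^ 2 - 2)) :=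
    Real.continuous_sqrt.comp (by continuity)
  have hAderiv : ∀ x ∈ Ioi (Real.sqrt 2),
      HasDerivAt A (-Real.sqrt (x ^ 2 - 2)
        + (2 * x / (2 * Real.sqrt (x ^ 2 - 2)) * (x - Real.sqrt 2)
          + Real.sqrt (x ^ 2 - 2) * 1)) x := by
    intro x hx
    have hu : 0 < x ^ 2 - 2 := sqrt_sub_two_pos hx
    have hq : HasDerivAt (fun y : ℝ => y ^ 2 - 2) (2 * x) x := by
      simpa using ((hasDerivAt_pow 2 x).sub_const 2)
    have hsq : HasDerivAt (fun y : ℝ => Real.sqrt (y ^ 2 - 2))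
        (2 * x / (2 * Real.sqrt (x ^ 2 - 2))) x := hq.sqrt (by positivity)
    exact (hasDerivAt_phiP hx).add (hsq.mul ((hasDerivAt_id x).sub_const _))
  have hmono : MonotoneOn A (Ici (Real.sqrt 2)) := by
    apply monotoneOn_of_deriv_nonneg (convex_Ici _)
    · exact continuousOn_phiP.add (hsc.continuousOn.mul (by fun_prop))
    · intro x hx
      rw [interior_Ici] at hx
      exact (hAderiv x hx).differentiableAt.differentiableWithinAt
    · intro x hx
      rw [interior_Ici] at hx
      rw [(hAderiv x hx).deriv]
      have hu : 0 < x ^ 2 - 2 := sqrt_sub_two_pos hx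
      have h1 : 0 < Real.sqrt (x ^ 2 - 2) := Real.sqrt_pos.2 hu
      have hxpos : 0 < x := lt_trans sqrt2_pos hx
      have h2 : 0 ≤ x - Real.sqrt 2 := by linarith [le_of_lt (mem_Ioi.1 hx)]
      have : 0 ≤ 2 * x / (2 * Real.sqrt (x ^ 2 - 2)) * (x - Real.sqrt 2) := by positivity
      linarith
  have hA0 : A (Real.sqrt 2) = 0 := by
    have h2 : Real.sqrt 2 ^ 2 - 2 = 0 := by
      rw [Real.sq_sqrt (by norm_num : (2:ℝ) ≥ 0)]; ring
    simp [hA, h2, phiP_sqrt2]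
  have := hmono self_mem_Ici hy hy
  rw [hA0] at this
  simp only [hA] at this
  linarith

lemma hasDerivAt_phi_sqrt2 : HasDerivAt Phi 0 (Real.sqrt 2) := by
  rw [hasDerivAt_iff_tendsto_slope]
  apply squeeze_zero_norm'
    (a := fun y : ℝ => Real.sqrt (y ^ 2 - 2))
  · have hmem : Ioi (1 : ℝ) ∈ 𝓝[≠] (Real.sqrt 2) :=
      nhdsWithin_le_nhds (isOpen_Ioi.mem_nhds one_lt_sqrt2)
    filter_upwards [hmem, self_mem_nhdsWithin] with y hy1 hyne
    have hyne' : y ≠ Real.sqrt 2 := hyne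
    rcases lt_or_ge y (Real.sqrt 2) with hlt | hge
    · have hy0 : Phi y = 0 := phi_zero_of_abs_lt (by
        rw [abs_of_pos (lt_trans one_pos hy1)]; exact hlt)
      have hs0 : Real.sqrt (y ^ 2 - 2) = 0 := Real.sqrt_eq_zero'.2 (by
        nlinarith [Real.sq_sqrt (by norm_num : (2:ℝ) ≥ 0), lt_trans one_pos (mem_Ioi.1 hy1)])
      have hP2 : Phi (Real.sqrt 2) = 0 := by
        rw [phi_eq_phiP le_rfl, phiP_sqrt2]
      simp [slope, hy0, hP2, hs0]
    · have hgt : Real.sqrt 2 < y := lt_of_le_of_ne hge (Ne.symm hyne')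
      have hP2 : Phi (Real.sqrt 2) = 0 := by rw [phi_eq_phiP le_rfl, phiP_sqrt2]
      have hPy : Phi y = phiP y := phi_eq_phiP hge
      have hup : phiP y ≤ 0 := phiP_nonpos hge
      have hlow := phiP_lower hge
      have hd : 0 < y - Real.sqrt 2 := by linarith
      rw [slope_def_field, hP2, hPy, Real.norm_eq_abs, abs_div, abs_of_pos hd,
        div_le_iff₀ hd, abs_of_nonpos (by linarith : phiP y - 0 ≤ 0)]
      nlinarith [Real.sqrt_nonneg (y ^ 2 - 2)]
  · have hc : ContinuousAt (fun y : ℝ => Real.sqrt (y ^ 2 - 2)) (Real.sqrt 2) :=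
      (Real.continuous_sqrt.comp (by continuity)).continuousAt
    have h2 : Real.sqrt (Real.sqrt 2 ^ 2 - 2) = 0 := by
      rw [Real.sq_sqrt (by norm_num : (2:ℝ) ≥ 0)]; simp
    have := hc.tendsto
    rw [h2] at this
    exact this.mono_left nhdsWithin_le_nhds

noncomputable def hfun (x : ℝ) : ℝ :=
  if x < 0 then Real.sqrt (x ^ 2 - 2) else -Real.sqrt (x ^ 2 - 2)

lemma hasDerivAt_phi (x : ℝ) : HasDerivAt Phi (hfun x) x := by
  have base : ∀ x : ℝ, 0 ≤ x → HasDerivAt Phi (-Real.sqrt (x ^ 2 - 2)) x := by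
    intro x h0
    rcases lt_trichotomy x (Real.sqrt 2) with hlt | heq | hgt
    · have hz : Real.sqrt (x ^ 2 - 2) = 0 := Real.sqrt_eq_zero'.2 (by
        nlinarith [Real.sq_sqrt (by norm_num : (2:ℝ) ≥ 0)])
      rw [hz, neg_zero]
      have hev : Phi =ᶠ[𝓝 x] fun _ => (0:ℝ) := by
        have hmem : Ioo (-Real.sqrt 2) (Real.sqrt 2) ∈ 𝓝 x :=
          isOpen_Ioo.mem_nhds ⟨by linarith [sqrt2_pos], hlt⟩
        filter_upwards [hmem] with y hy
        exact phi_zero_of_abs_lt (abs_lt.2 ⟨hy.1, hy.2⟩)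
      exact (hasDerivAt_const x (0:ℝ)).congr_of_eventuallyEq hev
    · subst heq
      have hz : Real.sqrt (Real.sqrt 2 ^ 2 - 2) = 0 := by
        rw [Real.sq_sqrt (by norm_num : (2:ℝ) ≥ 0)]; simp
      rw [hz, neg_zero]
      exact hasDerivAt_phi_sqrt2
    · apply (hasDerivAt_phiP hgt).congr_of_eventuallyEq
      have hmem : Ioi (Real.sqrt 2) ∈ 𝓝 x := isOpen_Ioi.mem_nhds hgt
      filter_upwards [hmem] with y hy
      exact phi_eq_phiP (le_of_lt hy)
  rcases lt_or_ge x 0 with hx | hx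
  · have hnx : (0:ℝ) ≤ -x := by linarith
    have h := base (-x) hnx
    have hcomp := h.comp x (hasDerivAt_neg x)
    have heq : (Phi ∘ fun y : ℝ => -y) = Phi := funext fun y => phi_even y
    rw [heq] at hcomp
    have hval : hfun x = -Real.sqrt ((-x) ^ 2 - 2) * -1 := by
      rw [hfun, if_pos hx]; rw [neg_pow]; ring_nf
    rw [hval]
    exact hcomp
  · have hval : hfun x = -Real.sqrt (x ^ 2 - 2) := by rw [hfun, if_neg (not_lt.2 hx)]
    rw [hval]; exact base x hx

lemma hfun_antitone : Antitone hfun := by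
  intro x y hxy
  unfold hfun
  rcases lt_or_ge y 0 with hy | hy
  · rw [if_pos hy, if_pos (lt_of_le_of_lt hxy hy)]
    exact Real.sqrt_le_sqrt (by nlinarith)
  · rw [if_neg (not_lt.2 hy)]
    rcases lt_or_ge x 0 with hx | hx
    · rw [if_pos hx]
      have := Real.sqrt_nonneg (x ^ 2 - 2)
      have := Real.sqrt_nonneg (y ^ 2 - 2)
      linarith
    · rw [if_neg (not_lt.2 hx)]
      have : Real.sqrt (x ^ 2 - 2) ≤ Real.sqrt (y ^ 2 - 2) :=
        Real.sqrt_le_sqrt (by nlinarith)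
      linarith

/-- For `m < −√2/2`, `F(x) = −x²/2 + 2mx + Φ(x)` has a unique global maximum at
`x* = m + 1/(2m)`, with `F''(x*) = −4m²/(2m²−1)` and
`F(x*) = m² + log|m| + (1/2)(1 + log 2)`. -/
theorem F_max_supercritical (m : ℝ) (hm : m < -(Real.sqrt 2 / 2))
    (F : ℝ → ℝ) (hF : ∀ x, F x = -x ^ 2 / 2 + 2 * m * x + Phi x) :
    (∀ x : ℝ, F x ≤ F (m + 1 / (2 * m))) ∧
    (∀ x : ℝ, F x = F (m + 1 / (2 * m)) → x = m + 1 / (2 * m)) ∧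
    iteratedDeriv 2 F (m + 1 / (2 * m)) = -(4 * m ^ 2) / (2 * m ^ 2 - 1) ∧
    F (m + 1 / (2 * m)) = m ^ 2 + Real.log |m| + (1 / 2) * (1 + Real.log 2) := by
  have h2 : Real.sqrt 2 ^ 2 = 2 := Real.sq_sqrt (by norm_num)
  have hs2 := sqrt2_pos
  have hm0 : m < 0 := by nlinarith
  have hmne : m ≠ 0 := ne_of_lt hm0
  have hmsq : 1 / 2 < m ^ 2 := by nlinarith
  set c : ℝ := m + 1 / (2 * m) with hc
  have hinv : 2 * m * (1 / (2 * m)) = 1 := by field_simp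
  have hsm : Real.sqrt 2 * m + 1 < 0 := by nlinarith
  have hclt : c < -Real.sqrt 2 := by
    rw [hc]
    nlinarith [sq_nonneg (Real.sqrt 2 * m + 1)]
  have hc0 : c < 0 := by linarith
  have hnn : 0 ≤ 1 / (2 * m) - m := by nlinarith
  have hsq_c : Real.sqrt (c ^ 2 - 2) = 1 / (2 * m) - m := by
    have he : c ^ 2 - 2 = (1 / (2 * m) - m) ^ 2 := by
      rw [hc]; field_simp; ring
    rw [he, Real.sqrt_sq hnn]
  have hFd : ∀ x, HasDerivAt F (2 * m - x + hfun x) x := by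
    intro x
    have hFeq : F = fun x => -x ^ 2 / 2 + 2 * m * x + Phi x := funext hF
    rw [hFeq]
    have h1 : HasDerivAt (fun x : ℝ => -x ^ 2 / 2 + 2 * m * x) (2 * m - x) x := by
      have := (((hasDerivAt_pow 2 x).neg.div_const 2).add ((hasDerivAt_id x).const_mul (2 * m)))
      refine this.congr_deriv ?_
      rw [show (2:ℕ) - 1 = 1 from rfl]; push_cast; ring
    exact h1.add (hasDerivAt_phi x)
  have hganti : StrictAnti (fun x => 2 * m - x + hfun x) := by
    intro x y hxy
    have := hfun_antitone hxy.le
    simp only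
    linarith
  have hgc : 2 * m - c + hfun c = 0 := by
    rw [hfun, if_pos hc0, hsq_c, hc]; ring
  have hFcont : Continuous F :=
    continuous_iff_continuousAt.2 fun x => (hFd x).differentiableAt.continuousAt
  have hmono : StrictMonoOn F (Iic c) := by
    apply strictMonoOn_of_deriv_pos (convex_Iic c) hFcont.continuousOn
    intro x hx
    rw [interior_Iic] at hx
    rw [(hFd x).deriv]
    have h' : 2 * m - c + hfun c < 2 * m - x + hfun x := hganti hx
    linarith
  have hanti : StrictAntiOn F (Ici c) := by
    apply strictAntiOn_of_deriv_neg (convex_Ici c) hFcont.continuousOn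
    intro x hx
    rw [interior_Ici] at hx
    rw [(hFd x).deriv]
    have h' : 2 * m - x + hfun x < 2 * m - c + hfun c := hganti hx
    linarith
  have hmax : ∀ x : ℝ, x ≠ c → F x < F c := by
    intro x hne
    rcases lt_or_gt_of_ne hne with hlt | hgt
    · exact hmono (le_of_lt hlt) self_mem_Iic hlt
    · exact hanti self_mem_Ici (le_of_lt hgt) hgt
  refine ⟨?_, ?_, ?_, ?_⟩
  · intro x
    rcases eq_or_ne x c with rfl | hne
    · exact le_refl _
    · exact (hmax x hne).le
  · intro x hx
    by_contra hne
    exact absurd hx (ne_of_lt (hmax x hne))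
  · have hderivF : deriv F = fun x => 2 * m - x + hfun x := funext fun x => (hFd x).deriv
    have hcsq : 0 < c ^ 2 - 2 := by nlinarith
    have hg2 : HasDerivAt (fun x => 2 * m - x + hfun x)
        (0 - 1 + 2 * c / (2 * Real.sqrt (c ^ 2 - 2))) c := by
      have hq : HasDerivAt (fun y : ℝ => y ^ 2 - 2) (2 * c) c := by
        simpa using ((hasDerivAt_pow 2 c).sub_const 2)
      have hsq : HasDerivAt (fun y : ℝ => Real.sqrt (y ^ 2 - 2))
          (2 * c / (2 * Real.sqrt (c ^ 2 - 2))) c := hq.sqrt (by positivity)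
      have hbase := (((hasDerivAt_const c (2 * m)).sub (hasDerivAt_id c)).add hsq)
      apply hbase.congr_of_eventuallyEq
      filter_upwards [isOpen_Iio.mem_nhds hc0] with y hy
      simp only [hfun, if_pos (show y < 0 from hy), id_eq, Pi.add_apply, Pi.sub_apply]
    have hiter : iteratedDeriv 2 F = deriv (deriv F) := by
      have h21 : (2 : ℕ) = 1 + 1 := rfl
      rw [h21, iteratedDeriv_succ, iteratedDeriv_one]
    rw [hiter, hderivF, hg2.deriv, hsq_c]
    have hne1 : 2 * m ^ 2 - 1 ≠ 0 := by nlinarith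
    have h3 : 1 - 2 * m ^ 2 ≠ 0 := by intro h; apply hne1; linarith
    rw [hc, show 1 / (2 * m) - m = (1 - 2 * m ^ 2) / (2 * m) by field_simp,
      show m + 1 / (2 * m) = (2 * m ^ 2 + 1) / (2 * m) by field_simp]
    field_simp
    ring
  · rw [hF c]
    have hPc : Phi c = phiP (-c) := by
      rw [← phi_even c]
      exact phi_eq_phiP (by linarith : Real.sqrt 2 ≤ -c)
    have hphiP : phiP (-c) = -((-c) * Real.sqrt (c ^ 2 - 2)) / 2 +
        Real.log ((-c + Real.sqrt (c ^ 2 - 2)) / Real.sqrt 2) := by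
      rw [phiP, neg_pow]
      norm_num
    have harg : -c + (1 / (2 * m) - m) = -(2 * m) := by rw [hc]; ring
    have hlog1 : Real.log (-(2 * m) / Real.sqrt 2)
        = Real.log 2 + Real.log (-m) - Real.log 2 / 2 := by
      rw [Real.log_div (ne_of_gt (by linarith : (0:ℝ) < -(2 * m))) (ne_of_gt hs2),
        Real.log_sqrt (by norm_num),
        show -(2 * m) = 2 * (-m) by ring,
        Real.log_mul two_ne_zero (by linarith : -m ≠ 0)]
    have habs : Real.log |m| = Real.log (-m) := by rw [abs_of_neg hm0]
    rw [hPc, hphiP, hsq_c, harg, hlog1, habs]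
    have hpoly : -c ^ 2 / 2 + 2 * m * c + -((-c) * (1 / (2 * m) - m)) / 2 = m ^ 2 + 1 / 2 := by
      rw [hc]; field_simp; ring
    linarith [hpoly]
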